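/- On pairs of N×N complex matrices, the map s₁ : (p, q) ↦ (p − α(q f^{-1} + f^{-1} q) − α² f^{-2}, q + α f^{-1}), where f = p + q² + t/2 and α ∈ ℂ, is an involution whenever f is invertible: applying it twice (with the parameter α replaced by −α in the second application) returns (p, q). -/
import Mathlib


/-- `f = p + q² + t/2` for matrix Painlevé II. -/
noncomputable def fPII {N : ℕ} (p q : Matrix (Fin N) (Fin N) ℂ) (t : ℂ) :
    Matrix (Fin N) (Fin N) ℂ :=
  p + q ^ 2 + (t / 2) • 1

/-- The `p`-component of the Bäcklund transformation `s₁` with root variable `α`. -/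
noncomputable def s1p {N : ℕ} (p q : Matrix (Fin N) (Fin N) ℂ) (t α : ℂ) :
    Matrix (Fin N) (Fin N) ℂ :=
  p - α • (q * (fPII p q t)⁻¹ + (fPII p q t)⁻¹ * q) - (α ^ 2) • ((fPII p q t)⁻¹) ^ 2

/-- The `q`-component of the Bäcklund transformation `s₁` with root variable `α`. -/
noncomputable def s1q {N : ℕ} (p q : Matrix (Fin N) (Fin N) ℂ) (t α : ℂ) :
    Matrix (Fin N) (Fin N) ℂ :=
  q + α • (fPII p q t)⁻¹

/-- `f` is invariant under `s₁`. -/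
lemma fPII_s1 {N : ℕ} (p q : Matrix (Fin N) (Fin N) ℂ) (t α : ℂ) :
    fPII (s1p p q t α) (s1q p q t α) t = fPII p q t := by
  unfold fPII s1p s1q
  set g := (p + q ^ 2 + (t / 2) • 1)⁻¹
  noncomm_ring
  simp only [smul_add, smul_smul, pow_two]
  abel

/-- The Bäcklund transformation `s₁` of matrix Painlevé II is an involution:
applying it twice (with the parameter `α` replaced by `-α` the second time)
returns `(p, q)`, provided `f = p + q² + t/2` is invertible. -/
theorem s1_involution (N : ℕ) (p q : Matrix (Fin N) (Fin N) ℂ) (t α : ℂ)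
    (hf : IsUnit (fPII p q t)) :
    s1p (s1p p q t α) (s1q p q t α) t (-α) = p ∧
    s1q (s1p p q t α) (s1q p q t α) t (-α) = q := by
  constructor
  · rw [s1p, fPII_s1]
    unfold s1p s1q
    set g := (fPII p q t)⁻¹
    noncomm_ring
    match_scalars <;> (simp; try ring)
  · rw [s1q, fPII_s1]
    unfold s1q
    match_scalars <;> simp
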